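/- arXiv:1912.02085 — 4 statements merged into one kernel-verified Lean document; each statement's English description precedes it below -/
import Mathlib

section
/- For every integer N ≥ 1 there exist probability vectors p_1, …, p_{N+3} on a three-element location set {c_1, c_2, t} (each p_i(c) > 0 and p_i(c_1)+p_i(c_2)+p_i(t) = 1), with t the true location, such that: (i) ∏_{i=1}^{N+3} p_i(t) > ∏_{i=1}^{N+3} p_i(c_1) and ∏_{i=1}^{N+3} p_i(t) > ∏_{i=1}^{N+3} p_i(c_2), so t is strictly the most likely location for the full collection; (ii) p_i(t) = 1/3 for 1 ≤ i ≤ N is strictly larger than p_i(t) for i ∈ {N+1, N+2, N+3}, and for every subset D ⊆ {1,…,N} the products over {1,…,N+3}∖D still satisfy ∏ p_i(t) > ∏ p_i(c_1) and ∏ p_i(t) > ∏ p_i(c_2) (so the first N greedy deletions leave t most likely); (iii) deleting exactly the two images N+1 and N+2 yields ∏_{i∉{N+1,N+2}} p_i(t) < ∏_{i∉{N+1,N+2}} p_i(c_1) and ∏_{i∉{N+1,N+2}} p_i(t) < ∏_{i∉{N+1,N+2}} p_i(c_2), so t becomes strictly the least likely location. -/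
noncomputable def ppvec (N : ℕ) (i : Fin (N + 3)) : Fin 3 → ℝ :=
  if (i : ℕ) < N then ![1/3, 1/3, 1/3]
  else if (i : ℕ) = N then ![1/10, 6/10, 3/10]
  else if (i : ℕ) = N + 1 then ![6/10, 1/10, 3/10]
  else ![7/20, 7/20, 3/10]

lemma ppvec_small {N : ℕ} {i : Fin (N+3)} (h : (i : ℕ) < N) (c : Fin 3) :
    ppvec N i c = 1/3 := by
  simp only [ppvec, if_pos h]
  fin_cases c <;> norm_num

lemma ppvec_N {N : ℕ} : ppvec N ⟨N, by omega⟩ = ![1/10, 6/10, 3/10] := by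
  simp [ppvec]

lemma ppvec_N1 {N : ℕ} : ppvec N ⟨N+1, by omega⟩ = ![6/10, 1/10, 3/10] := by
  simp [ppvec]

lemma ppvec_N2 {N : ℕ} : ppvec N ⟨N+2, by omega⟩ = ![7/20, 7/20, 3/10] := by
  simp [ppvec]

lemma prod_split (N : ℕ) (S : Finset (Fin (N+3))) (c : Fin 3) :
    ∏ i ∈ S, ppvec N i c =
      (1/3 : ℝ)^((S.filter (fun i : Fin (N+3) => (i : ℕ) < N)).card) *
      ∏ i ∈ S.filter (fun i : Fin (N+3) => ¬ (i : ℕ) < N), ppvec N i c := by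
  rw [← Finset.prod_filter_mul_prod_filter_not S (fun i : Fin (N+3) => (i : ℕ) < N)]
  congr 1
  rw [Finset.prod_congr rfl (fun i hi => ppvec_small (Finset.mem_filter.mp hi).2 c)]
  simp [Finset.prod_const]

/-- Observation 1: greedy deletion can be arbitrarily sub-optimal.  Locations are
`Fin 3`, with `0 = c₁`, `1 = c₂`, and `2 = t` the true location.  For every `N ≥ 1`
there are `N + 3` probability vectors such that: the true location is strictly most
likely for the full collection; the first `N` images have true-location probability
`1/3`, strictly larger than that of the last three images; deleting any subset of the
first `N` images leaves the true location strictly most likely; yet deleting exactly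
images `N` and `N+1` (0-indexed, i.e. the images `N+1` and `N+2` in the paper's
1-indexed notation) makes the true location strictly least likely. -/
theorem greedy_arbitrarily_suboptimal (N : ℕ) (hN : 1 ≤ N) :
    ∃ p : Fin (N + 3) → Fin 3 → ℝ,
      (∀ i c, 0 < p i c) ∧
      (∀ i, p i 0 + p i 1 + p i 2 = 1) ∧
      -- (i) the true location is strictly most likely for the full collection
      ((∏ i, p i 0) < ∏ i, p i 2) ∧ ((∏ i, p i 1) < ∏ i, p i 2) ∧
      -- (ii) the first N images have true-location probability 1/3, strictly larger
      -- than the true-location probabilities of the last three images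
      (∀ i : Fin (N + 3), (i : ℕ) < N → p i 2 = 1 / 3) ∧
      (∀ i : Fin (N + 3), N ≤ (i : ℕ) → p i 2 < 1 / 3) ∧
      -- and deleting any subset of the first N images leaves t strictly most likely
      (∀ D : Finset (Fin (N + 3)), (∀ i ∈ D, (i : ℕ) < N) →
        ((∏ i ∈ Finset.univ \ D, p i 0) < ∏ i ∈ Finset.univ \ D, p i 2) ∧
        ((∏ i ∈ Finset.univ \ D, p i 1) < ∏ i ∈ Finset.univ \ D, p i 2)) ∧
      -- (iii) deleting exactly the two images with indices N and N+1 makes t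
      -- strictly least likely
      ((∏ i ∈ Finset.univ.filter
          (fun i : Fin (N + 3) => (i : ℕ) ≠ N ∧ (i : ℕ) ≠ N + 1), p i 2) <
        ∏ i ∈ Finset.univ.filter
          (fun i : Fin (N + 3) => (i : ℕ) ≠ N ∧ (i : ℕ) ≠ N + 1), p i 0) ∧
      ((∏ i ∈ Finset.univ.filter
          (fun i : Fin (N + 3) => (i : ℕ) ≠ N ∧ (i : ℕ) ≠ N + 1), p i 2) <
        ∏ i ∈ Finset.univ.filter
          (fun i : Fin (N + 3) => (i : ℕ) ≠ N ∧ (i : ℕ) ≠ N + 1), p i 1) := by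
  set iN : Fin (N+3) := ⟨N, by omega⟩ with hiN
  set iN1 : Fin (N+3) := ⟨N+1, by omega⟩ with hiN1
  set iN2 : Fin (N+3) := ⟨N+2, by omega⟩ with hiN2
  have hne12 : iN ≠ iN1 := by simp [hiN, hiN1, Fin.ext_iff]
  have hne13 : iN ≠ iN2 := by simp [hiN, hiN2, Fin.ext_iff]
  have hne23 : iN1 ≠ iN2 := by simp [hiN1, hiN2, Fin.ext_iff]
  -- product over the big three
  have hT : ∀ (S : Finset (Fin (N+3))), (∀ i, i ∈ S ↔ ¬ (i:ℕ) < N) →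
      ∀ c, ∏ i ∈ S, ppvec N i c = ppvec N iN c * (ppvec N iN1 c * ppvec N iN2 c) := by
    intro S hS c
    have : S = {iN, iN1, iN2} := by
      ext i
      rw [hS]
      simp only [Finset.mem_insert, Finset.mem_singleton, hiN, hiN1, hiN2, Fin.ext_iff]
      have := i.isLt
      omega
    rw [this, Finset.prod_insert (by simp [hne12, hne13]),
      Finset.prod_insert (by simp [hne23]), Finset.prod_singleton]
  -- general deletion lemma
  have key : ∀ D : Finset (Fin (N + 3)), (∀ i ∈ D, (i : ℕ) < N) →
      ((∏ i ∈ Finset.univ \ D, ppvec N i 0) < ∏ i ∈ Finset.univ \ D, ppvec N i 2) ∧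
      ((∏ i ∈ Finset.univ \ D, ppvec N i 1) < ∏ i ∈ Finset.univ \ D, ppvec N i 2) := by
    intro D hD
    have hfil : ∀ i : Fin (N+3), i ∈ (Finset.univ \ D).filter (fun i : Fin (N+3) => ¬ (i:ℕ) < N)
        ↔ ¬ (i:ℕ) < N := by
      intro i
      simp only [Finset.mem_filter, Finset.mem_sdiff, Finset.mem_univ, true_and]
      constructor
      · tauto
      · intro h; exact ⟨fun hi => h (hD i hi), h⟩
    have hpow : (0:ℝ) < (1/3 : ℝ)^(((Finset.univ \ D).filter
        (fun i : Fin (N+3) => (i : ℕ) < N)).card) := by positivity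
    refine ⟨?_, ?_⟩
    · rw [prod_split N _ 0, prod_split N _ 2, hT _ hfil, hT _ hfil]
      apply mul_lt_mul_of_pos_left _ hpow
      rw [hiN, hiN1, hiN2, ppvec_N, ppvec_N1, ppvec_N2]
      norm_num [Matrix.cons_val_two, Matrix.vecHead, Matrix.vecTail]
    · rw [prod_split N _ 1, prod_split N _ 2, hT _ hfil, hT _ hfil]
      apply mul_lt_mul_of_pos_left _ hpow
      rw [hiN, hiN1, hiN2, ppvec_N, ppvec_N1, ppvec_N2]
      norm_num [Matrix.cons_val_two, Matrix.vecHead, Matrix.vecTail]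
  refine ⟨ppvec N, ?_, ?_, ?_, ?_, ?_, ?_, key, ?_, ?_⟩
  · intro i c
    unfold ppvec
    split_ifs <;> fin_cases c <;> norm_num
  · intro i
    unfold ppvec
    split_ifs <;> norm_num [Matrix.cons_val_two, Matrix.vecHead, Matrix.vecTail]
  · have := (key ∅ (by simp)).1; simpa using this
  · have := (key ∅ (by simp)).2; simpa using this
  · intro i h; exact ppvec_small h 2
  · intro i h
    unfold ppvec
    rw [if_neg (by omega)]
    split_ifs <;> norm_num [Matrix.cons_val_two, Matrix.vecHead, Matrix.vecTail]
  all_goals {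
    have hfil2 : ∀ i : Fin (N+3),
        i ∈ (Finset.univ.filter (fun i : Fin (N+3) => (i:ℕ) ≠ N ∧ (i:ℕ) ≠ N+1)).filter
          (fun i : Fin (N+3) => ¬ (i:ℕ) < N) ↔ i = iN2 := by
      intro i
      simp only [Finset.mem_filter, Finset.mem_univ, true_and, hiN2, Fin.ext_iff]
      have := i.isLt
      omega
    have hsingle : ∀ c, ∏ i ∈ (Finset.univ.filter
        (fun i : Fin (N+3) => (i:ℕ) ≠ N ∧ (i:ℕ) ≠ N+1)).filter (fun i : Fin (N+3) => ¬ (i:ℕ) < N),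
        ppvec N i c = ppvec N iN2 c := by
      intro c
      have : (Finset.univ.filter (fun i : Fin (N+3) => (i:ℕ) ≠ N ∧ (i:ℕ) ≠ N+1)).filter
          (fun i : Fin (N+3) => ¬ (i:ℕ) < N) = {iN2} := by
        ext i; rw [hfil2]; simp
      rw [this, Finset.prod_singleton]
    have hpow : (0:ℝ) < (1/3 : ℝ)^(((Finset.univ.filter
        (fun i : Fin (N+3) => (i:ℕ) ≠ N ∧ (i:ℕ) ≠ N+1)).filter
        (fun i : Fin (N+3) => (i : ℕ) < N)).card) := by positivity
    rw [prod_split N _ 2, hsingle]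
    first
    | (rw [prod_split N _ 0, hsingle]
       apply mul_lt_mul_of_pos_left _ hpow
       rw [hiN2, ppvec_N2]; norm_num [Matrix.cons_val_two, Matrix.vecHead, Matrix.vecTail])
    | (rw [prod_split N _ 1, hsingle]
       apply mul_lt_mul_of_pos_left _ hpow
       rw [hiN2, ppvec_N2]; norm_num [Matrix.cons_val_two, Matrix.vecHead, Matrix.vecTail])
  }
end

section
/- Let A = Fin n be a collection of images, C a finite set of locations with |C| ≥ 2, t ∈ C the true location, and S_i : C → ℝ the score vector of image i. For each j ∈ C with j ≠ t define x^j(i) = S_i(j) − S_i(t), and let f(j) be the least d ≤ n such that the sum of the n−d largest values of x^j is ≥ 0 (such d always exists since the empty sum is 0). Then min { |D| : D ⊆ A and there exists j ≠ t with ∑_{i ∉ D} S_i(j) ≥ ∑_{i ∉ D} S_i(t) } = min_{j ≠ t} f(j). That is, the minimum number of deletions needed so that the true location is no longer the strictly most likely prediction equals the minimum over alternate locations j of the greedy per-alternate deletion count. -/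
/-!
For a fixed alternate location `j`, among deletion sets of a given size `d` the censored
margin `∑_{i ∉ D} (S i j - S i t)` is largest when `D` consists of the `d` images with the
smallest advantage of `j` over `t` (an exchange argument), so the least successful size for `j`
is the greedy count `f j`. Minimising over `j` gives the theorem.
-/

open Finset

theorem Finset.sum_compl_map_equiv {α β M : Type*} [Fintype α] [Fintype β] [DecidableEq α]
    [DecidableEq β] [AddCommMonoid M] (e : α ≃ β) (s : Finset α) (g : β → M) :
    ∑ b ∈ (s.map e.toEmbedding)ᶜ, g b = ∑ a ∈ sᶜ, g (e a) := by
  rw [show (s.map e.toEmbedding)ᶜ = sᶜ.map e.toEmbedding by ext; simp [mem_map_equiv], sum_map]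
  rfl

section Exchange

variable {ι M : Type*} [AddCommMonoid M] [LinearOrder M]

theorem Finset.sum_le_sum_of_card_eq_of_forall_le [IsOrderedAddMonoid M] {s t : Finset ι}
    {f : ι → M} (hcard : #s = #t) (hle : ∀ a ∈ s, ∀ b ∈ t, f a ≤ f b) :
    ∑ i ∈ s, f i ≤ ∑ i ∈ t, f i := by
  rcases s.eq_empty_or_nonempty with rfl | hs
  · rw [card_empty, eq_comm, card_eq_zero] at hcard
    simp [hcard]
  calc ∑ i ∈ s, f i ≤ #s • s.sup' hs f := sum_le_card_nsmul _ _ _ fun a ha => le_sup' f ha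
    _ = #t • s.sup' hs f := by rw [hcard]
    _ ≤ ∑ i ∈ t, f i :=
      card_nsmul_le_sum _ _ _ fun b hb => sup'_le hs f fun a ha => hle a ha b hb

theorem Fin.card_filter_le_val (n d : ℕ) : #{i : Fin n | d ≤ (i : ℕ)} = n - d := by
  simp_rw [← not_lt, filter_not, card_sdiff_of_subset (filter_subset _ _), card_univ,
    Fintype.card_fin, Fin.card_filter_val_lt]
  omega

variable [IsOrderedCancelAddMonoid M]

theorem Monotone.sum_le_sum_filter_le {n d : ℕ} {y : Fin n → M} (hy : Monotone y)
    {T : Finset (Fin n)} (hT : #T = n - d) :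
    ∑ i ∈ T, y i ≤ ∑ i ∈ univ.filter (fun i : Fin n => d ≤ (i : ℕ)), y i := by
  rw [← sum_sdiff_le_sum_sdiff]
  refine sum_le_sum_of_card_eq_of_forall_le
    (card_sdiff_comm (hT.trans (Fin.card_filter_le_val n d).symm)) fun a ha b hb => hy ?_
  simp only [mem_sdiff, mem_filter, mem_univ, true_and] at ha hb
  exact Fin.le_def.mpr (by omega)

theorem exists_card_eq_sum_compl_nonneg_iff {n : ℕ} {x : Fin n → M} {σ : Equiv.Perm (Fin n)}
    (hσ : Monotone (x ∘ σ)) (d : ℕ) :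
    (∃ D : Finset (Fin n), #D = d ∧ 0 ≤ ∑ i ∈ Dᶜ, x i) ↔
      d ≤ n ∧ 0 ≤ ∑ i ∈ univ.filter (fun i : Fin n => d ≤ (i : ℕ)), x (σ i) := by
  constructor
  · rintro ⟨D, rfl, hD⟩
    refine ⟨card_le_univ D |>.trans_eq (Fintype.card_fin n), hD.trans ?_⟩
    have hcard : #(Dᶜ.map σ.symm.toEmbedding) = n - #D := by simp [card_compl]
    calc ∑ i ∈ Dᶜ, x i = ∑ i ∈ Dᶜ.map σ.symm.toEmbedding, x (σ i) := by simp [sum_map]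
      _ ≤ _ := hσ.sum_le_sum_filter_le hcard
  · rintro ⟨hd, hsum⟩
    refine ⟨(univ.filter fun i : Fin n => (i : ℕ) < d).map σ.toEmbedding, ?_, ?_⟩
    · simp [Fin.card_filter_val_lt, hd]
    · simpa [sum_compl_map_equiv, compl_filter] using hsum

end Exchange

theorem Nat.sInf_setOf_exists_mem_eq_sInf_setOf_exists_eq {ι : Type*} {p : ι → Prop}
    (hp : ∃ j, p j) {G : ι → Set ℕ} {f : ι → ℕ} (hG : ∀ j, p j → IsLeast (G j) (f j)) :
    sInf {m | ∃ j, p j ∧ m ∈ G j} = sInf {m | ∃ j, p j ∧ f j = m} := by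
  have hne : {m | ∃ j, p j ∧ f j = m}.Nonempty := hp.elim fun j hj => ⟨f j, j, hj, rfl⟩
  obtain ⟨j₀, hj₀, hmin⟩ := Nat.sInf_mem hne
  refine IsLeast.csInf_eq ⟨⟨j₀, hj₀, ?_⟩, ?_⟩
  · rw [← hmin]
    exact (hG j₀ hj₀).1
  rintro m ⟨j, hj, hm⟩
  exact le_trans (Nat.sInf_le ⟨j, hj, rfl⟩) ((hG j hj).2 hm)

/-- Correctness of the paper's polynomial-time algorithm for the top-1 guarantee.
For each alternate location `j ≠ t`, let `σ j` sort the per-image score advantages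
`x^j i = S i j − S i t` in ascending order, and let `f j` be the least `d ≤ n` such
that the sum of the `n − d` largest values of `x^j` is nonnegative.  Then the minimum
cardinality of a deletion set `D` for which some alternate location `j ≠ t` has
censored score at least that of the true location `t` equals the minimum of `f j`
over the alternate locations `j ≠ t`. -/
theorem top1_algorithm_correct {C : Type*} [Fintype C] [DecidableEq C]
    (hC : 2 ≤ Fintype.card C) (n : ℕ) (t : C) (S : Fin n → C → ℝ)
    (σ : C → Equiv.Perm (Fin n))
    (hσ : ∀ j : C, ∀ i i' : Fin n, i ≤ i' →
      S (σ j i) j - S (σ j i) t ≤ S (σ j i') j - S (σ j i') t)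
    (f : C → ℕ)
    (hf : ∀ j : C, j ≠ t →
      IsLeast {d : ℕ | d ≤ n ∧
        0 ≤ ∑ i ∈ Finset.univ.filter (fun i : Fin n => d ≤ (i : ℕ)),
              (S (σ j i) j - S (σ j i) t)} (f j)) :
    sInf {m : ℕ | ∃ D : Finset (Fin n), D.card = m ∧
        ∃ j : C, j ≠ t ∧ (∑ i ∈ Dᶜ, S i t) ≤ ∑ i ∈ Dᶜ, S i j} =
      sInf {m : ℕ | ∃ j : C, j ≠ t ∧ f j = m} := by
  have hleast : ∀ j, j ≠ t →
      IsLeast {d | ∃ D : Finset (Fin n), #D = d ∧ ∑ i ∈ Dᶜ, S i t ≤ ∑ i ∈ Dᶜ, S i j} (f j) := by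
    intro j hj
    convert hf j hj using 1
    ext d
    simp_rw [← sub_nonneg (b := ∑ i ∈ _, S i t), ← sum_sub_distrib]
    exact exists_card_eq_sum_compl_nonneg_iff (x := fun i => S i j - S i t) (hσ j) d
  rw [← Nat.sInf_setOf_exists_mem_eq_sInf_setOf_exists_eq
    (Fintype.exists_ne_of_one_lt_card hC t) hleast]
  congr 1
  ext m
  constructor
  · rintro ⟨D, rfl, j, hj, hle⟩
    exact ⟨j, hj, D, rfl, hle⟩
  · rintro ⟨j, hj, D, rfl, hle⟩
    exact ⟨D, rfl, j, hj, hle⟩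
end

section
/- In the Knapsack-to-DTAL construction (n+1 images over locations {t, p, q} with S_i(t) = 0 for all i; S_i(p) = v(i) > 0 and S_i(q) = −w(i) with w(i) > 0 for i ≤ n; S_{n+1}(p) = −V with V > 0 and S_{n+1}(q) = W with W > 0), every nonempty kept subset A' ⊆ {1,…,n+1} satisfying ∑_{i ∈ A'} S_i(t) ≤ ∑_{i ∈ A'} S_i(q) must contain the image n+1; equivalently, no feasible deletion set for the DTAL instance can delete image n+1. -/
/-! Every image other than `n+1` has `q`-score `-w(i) < 0 = t`-score, so a nonempty kept set
avoiding `n+1` would have total `q`-score strictly below its total `t`-score. -/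

theorem Finset.mem_of_sum_le_sum_of_lt_of_ne {ι M : Type*} [AddCommMonoid M] [PartialOrder M]
    [IsOrderedCancelAddMonoid M] {s : Finset ι} (hs : s.Nonempty) {f g : ι → M} {a : ι}
    (hlt : ∀ i, i ≠ a → g i < f i) (hle : ∑ i ∈ s, f i ≤ ∑ i ∈ s, g i) : a ∈ s := by
  by_contra ha
  have hsum : ∑ i ∈ s, g i < ∑ i ∈ s, f i :=
    Finset.sum_lt_sum_of_nonempty hs fun i hi => hlt i fun hia => ha (hia ▸ hi)
  exact not_le_of_gt hsum hle

theorem dtal_last_image_kept_general (n : ℕ) (w : Fin n → ℝ)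
    (hw : ∀ i, 0 < w i)
    (S : Fin (n + 1) → Fin 3 → ℝ)
    (hSt : ∀ i, S i 0 = 0)
    (hSq : ∀ i : Fin n, S i.castSucc 2 = -(w i))
    (A' : Finset (Fin (n + 1))) (hA : A'.Nonempty)
    (hq : (∑ i ∈ A', S i 0) ≤ ∑ i ∈ A', S i 2) :
    Fin.last n ∈ A' := by
  refine Finset.mem_of_sum_le_sum_of_lt_of_ne hA (fun i hi => ?_) hq
  obtain ⟨j, rfl⟩ := Fin.exists_castSucc_eq.mpr hi
  rw [hSq, hSt]
  exact neg_neg_of_pos (hw j)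

/-- Structural step in the proof of Lemma 1: in the Knapsack-to-DTAL construction
(locations `Fin 3` with `0 = t`, `1 = p`, `2 = q`), every nonempty kept subset `A'`
on which the total `q`-score is at least the total `t`-score must contain the final
image `n+1`; equivalently, no feasible deletion set may delete image `n+1`. -/
theorem dtal_last_image_kept (n : ℕ) (v w : Fin n → ℝ)
    (hv : ∀ i, 0 < v i) (hw : ∀ i, 0 < w i) (W V : ℝ) (hW : 0 < W) (hV : 0 < V)
    (S : Fin (n + 1) → Fin 3 → ℝ)
    (hSt : ∀ i, S i 0 = 0)
    (hSp : ∀ i : Fin n, S i.castSucc 1 = v i)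
    (hSq : ∀ i : Fin n, S i.castSucc 2 = -(w i))
    (hlp : S (Fin.last n) 1 = -V)
    (hlq : S (Fin.last n) 2 = W)
    (A' : Finset (Fin (n + 1))) (hA : A'.Nonempty)
    (hq : (∑ i ∈ A', S i 0) ≤ ∑ i ∈ A', S i 2) :
    Fin.last n ∈ A' :=
  dtal_last_image_kept_general n w hw S hSt hSq A' hA hq
end

section
/- Let A = Fin N be a collection of images with score vectors S_i : C → ℝ over a finite location set C with true location t, and fix k ∈ ℕ. For z : A → {0,1} define v_j(z) = ∑_i z_i · (S_i(j) − S_i(t)) for each j ≠ t, and suppose there exists a deletion set D ⊆ A with |{ j ≠ t : ∑_{i ∈ A∖D} S_i(j) ≥ ∑_{i ∈ A∖D} S_i(t) }| ≥ k. Then the maximum of ∑_i z_i over all z : A → {0,1} and h : C∖{t} → {0,1} satisfying h_j · v_j(z) ≥ 0 for all j ≠ t and ∑_{j ≠ t} h_j ≥ k, equals N minus the minimum cardinality of a deletion set D ⊆ A for which at least k locations j ≠ t satisfy ∑_{i ∈ A∖D} S_i(j) ≥ ∑_{i ∈ A∖D} S_i(t). That is, the mixed-integer program (7) with constraints (5)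 computes exactly the minimum-deletion top-k guarantee problem (3). -/
/-!
A binary vector `z` is the keep indicator of the complement of a deletion set `D`, and then
`v_j(z)` is the censored score of `j` minus that of `t` after deleting `D`. For `h_j ∈ {0, 1}`
the bilinear constraint says exactly that `h_j = 1` only if `j` beats `t`, so the feasible
points of the MILP are the pairs (keep indicator of some `D`, indicator of at least `k` of the
locations beating `t` after deleting `D`), and maximising the kept count is minimising `|D|`.
-/

open Finset

section

variable {ι C : Type*} [Fintype ι] [DecidableEq ι]

def keep (D : Finset ι) (i : ι) : ℕ := if i ∈ Dᶜ then 1 else 0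

lemma keep_le_one (D : Finset ι) (i : ι) : keep D i ≤ 1 := by
  unfold keep; split <;> simp

lemma sum_keep (D : Finset ι) : ∑ i, keep D i = Fintype.card ι - #D := by
  simp only [keep, sum_boole, filter_mem_eq_inter, univ_inter, card_compl, Nat.cast_id]

lemma exists_eq_keep {z : ι → ℕ} (hz : ∀ i, z i ≤ 1) : ∃ D : Finset ι, z = keep D := by
  refine ⟨(univ.filter (z · = 1))ᶜ, funext fun i => ?_⟩
  rcases Nat.le_one_iff_eq_zero_or_eq_one.mp (hz i) with h | h <;> simp [keep, h]

/-- The quantity `v_j(z)` of the paper. -/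
def margin (S : ι → C → ℝ) (t : C) (z : ι → ℕ) (j : C) : ℝ :=
  ∑ i, (z i : ℝ) * (S i j - S i t)

lemma margin_keep (S : ι → C → ℝ) (t : C) (D : Finset ι) (j : C) :
    margin S t (keep D) j = ∑ i ∈ Dᶜ, S i j - ∑ i ∈ Dᶜ, S i t := by
  simp only [margin, keep, Nat.cast_ite, Nat.cast_one, Nat.cast_zero, ite_mul, one_mul,
    zero_mul, sum_ite_mem, univ_inter, sum_sub_distrib]

variable [Fintype C] [DecidableEq C]

noncomputable def beaters (S : ι → C → ℝ) (t : C) (D : Finset ι) : Finset C :=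
  univ.filter fun j => j ≠ t ∧ ∑ i ∈ Dᶜ, S i t ≤ ∑ i ∈ Dᶜ, S i j

lemma mem_beaters_iff {S : ι → C → ℝ} {t : C} {D : Finset ι} {j : C} :
    j ∈ beaters S t D ↔ j ≠ t ∧ 0 ≤ margin S t (keep D) j := by
  simp [beaters, margin_keep]

lemma beaters_subset_erase (S : ι → C → ℝ) (t : C) (D : Finset ι) :
    beaters S t D ⊆ univ.erase t := fun _ hj =>
  mem_erase.mpr ⟨(mem_beaters_iff.mp hj).1, mem_univ _⟩

noncomputable def beatIndicator (S : ι → C → ℝ) (t : C) (D : Finset ι) (j : C) : ℕ :=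
  if j ∈ beaters S t D then 1 else 0

lemma beatIndicator_le_one (S : ι → C → ℝ) (t : C) (D : Finset ι) (j : C) :
    beatIndicator S t D j ≤ 1 := by
  unfold beatIndicator; split <;> simp

lemma beatIndicator_mul_margin_nonneg (S : ι → C → ℝ) (t : C) (D : Finset ι) (j : C) :
    0 ≤ (beatIndicator S t D j : ℝ) * margin S t (keep D) j := by
  unfold beatIndicator
  split_ifs with hj
  · simpa using (mem_beaters_iff.mp hj).2
  · simp

lemma sum_beatIndicator (S : ι → C → ℝ) (t : C) (D : Finset ι) :
    ∑ j ∈ univ.erase t, beatIndicator S t D j = #(beaters S t D) := by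
  simp only [beatIndicator, sum_boole, filter_mem_eq_inter,
    inter_eq_right.mpr (beaters_subset_erase S t D), Nat.cast_id]

lemma sum_le_card_of_le_one {α : Type*} {s T : Finset α} {h : α → ℕ}
    (hh : ∀ j ∈ s, h j ≤ 1) (hsupp : ∀ j ∈ s, h j ≠ 0 → j ∈ T) : ∑ j ∈ s, h j ≤ #T :=
  calc ∑ j ∈ s, h j
      = ∑ j ∈ s.filter (h · ≠ 0), h j := (sum_filter_ne_zero s).symm
    _ ≤ #(s.filter (h · ≠ 0)) • 1 :=
        sum_le_card_nsmul _ _ _ fun j hj => hh j (mem_filter.mp hj).1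
    _ ≤ #T := by
        rw [smul_eq_mul, mul_one]
        exact card_le_card fun j hj => hsupp j (mem_filter.mp hj).1 (mem_filter.mp hj).2

lemma sum_le_card_beaters {S : ι → C → ℝ} {t : C} {D : Finset ι} {h : C → ℕ}
    (hh : ∀ j, h j ≤ 1) (hbeat : ∀ j, j ≠ t → 0 ≤ (h j : ℝ) * margin S t (keep D) j) :
    ∑ j ∈ univ.erase t, h j ≤ #(beaters S t D) := by
  refine sum_le_card_of_le_one (fun j _ => hh j) fun j hj hj0 => ?_
  have hjt : j ≠ t := ne_of_mem_erase hj
  have hpos : (0 : ℝ) < h j := by exact_mod_cast Nat.pos_of_ne_zero hj0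
  exact mem_beaters_iff.mpr ⟨hjt, nonneg_of_mul_nonneg_right (hbeat j hjt) hpos⟩

end

/-- The MILP for the top-`k` guarantee computes exactly the minimum-deletion problem:
provided some deletion set makes at least `k` locations `j ≠ t` beat the true
location `t`, the maximum of `∑ i z i` over binary keep indicators `z` and beat
indicators `h` satisfying the bilinear constraints `h j · (∑ i z i (S i j − S i t)) ≥ 0`
and `∑_{j ≠ t} h j ≥ k` equals `N` minus the minimum cardinality of a deletion set
`D` for which at least `k` locations `j ≠ t` have censored total score at least that
of `t`. -/
theorem milp_topk_correct (N : ℕ) {C : Type*} [Fintype C] [DecidableEq C]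
    (S : Fin N → C → ℝ) (t : C) (k : ℕ)
    (hfeas : ∃ D : Finset (Fin N),
      k ≤ (Finset.univ.filter
        (fun j : C => j ≠ t ∧ (∑ i ∈ Dᶜ, S i t) ≤ ∑ i ∈ Dᶜ, S i j)).card) :
    sSup {m : ℕ | ∃ z : Fin N → ℕ, ∃ h : C → ℕ,
        (∀ i, z i ≤ 1) ∧ (∀ j, h j ≤ 1) ∧
        (∀ j : C, j ≠ t →
          0 ≤ (h j : ℝ) * ∑ i, (z i : ℝ) * (S i j - S i t)) ∧
        k ≤ (∑ j ∈ Finset.univ.erase t, h j) ∧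
        m = ∑ i, z i} =
      N - sInf {m : ℕ | ∃ D : Finset (Fin N), D.card = m ∧
        k ≤ (Finset.univ.filter
          (fun j : C => j ≠ t ∧ (∑ i ∈ Dᶜ, S i t) ≤ ∑ i ∈ Dᶜ, S i j)).card} := by
  obtain ⟨D₀, hD₀⟩ := hfeas
  set T := {m : ℕ | ∃ D : Finset (Fin N), D.card = m ∧ k ≤ #(beaters S t D)}
  change sSup _ = N - sInf T
  obtain ⟨Dmin, hDmin, hkDmin⟩ : sInf T ∈ T := Nat.sInf_mem ⟨D₀.card, D₀, rfl, hD₀⟩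
  refine IsGreatest.csSup_eq ⟨⟨keep Dmin, beatIndicator S t Dmin, keep_le_one Dmin,
    beatIndicator_le_one S t Dmin, fun j _ => beatIndicator_mul_margin_nonneg S t Dmin j,
    (sum_beatIndicator S t Dmin).symm ▸ hkDmin, ?_⟩, ?_⟩
  · rw [sum_keep, Fintype.card_fin, hDmin]
  · rintro m ⟨z, h, hz, hh, hbeat, hk, rfl⟩
    obtain ⟨D, rfl⟩ := exists_eq_keep hz
    rw [sum_keep, Fintype.card_fin]
    have hD : #D ∈ T := ⟨D, rfl, hk.trans (sum_le_card_beaters hh hbeat)⟩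
    exact Nat.sub_le_sub_left (Nat.sInf_le hD) N
end
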